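/- arXiv:2603.19320 — 3 statements merged into one kernel-verified Lean document; each statement's English description precedes it below -/
import Mathlib

section
/- The generating functions of the crowding in-degree process satisfy the recursion G (m+1) z = G m z + (z − 1) · G m (q·z) for all m ≥ 0 and all real z, with G 0 z = 1. -/
open Finset Filter

/-- The crowding in-degree process: `P q m r` is the probability of having
accepted `r` edges after `m` proposals, with acceptance probability `q^r`. -/
noncomputable def crowdP (q : ℝ) : ℕ → ℕ → ℝ
  | 0, r => if r = 0 then 1 else 0
  | m + 1, r =>
      crowdP q m r * (1 - q ^ r) +
        (if r = 0 then 0 else crowdP q m (r - 1) * q ^ (r - 1))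

/-- Generating function `G m z = ∑_{r=0}^m P m r · z^r`. -/
noncomputable def crowdG (q : ℝ) (m : ℕ) (z : ℝ) : ℝ :=
  ∑ r ∈ Finset.range (m + 1), crowdP q m r * z ^ r

/-- Centering sequence `x_m = (1/α)·log(1 + (e^α − 1)·m)`. -/
noncomputable def crowdX (α : ℝ) (m : ℕ) : ℝ :=
  (1 / α) * Real.log (1 + (Real.exp α - 1) * m)

/-- Mean `μ_m = ∑_{r=0}^m r · P m r`. -/
noncomputable def crowdMu (q : ℝ) (m : ℕ) : ℝ :=
  ∑ r ∈ Finset.range (m + 1), (r : ℝ) * crowdP q m r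

lemma crowdP_eq_zero (q : ℝ) : ∀ m r, m < r → crowdP q m r = 0 := by
  intro m
  induction m with
  | zero =>
      intro r hr
      have hr0 : r ≠ 0 := by omega
      simp [crowdP, hr0]
  | succ m ih =>
      intro r hr
      have hr0 : r ≠ 0 := by omega
      simp only [crowdP, if_neg hr0]
      rw [ih r (by omega), ih (r - 1) (by omega)]
      ring

lemma crowdG_zero (q : ℝ) (z : ℝ) : crowdG q 0 z = 1 := by
  simp [crowdG, crowdP]

lemma crowdG_rec (q : ℝ) (m : ℕ) (z : ℝ) :
    crowdG q (m + 1) z = crowdG q m z + (z - 1) * crowdG q m (q * z) := by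
  unfold crowdG
  have expand : ∀ r, crowdP q (m + 1) r * z ^ r =
      (crowdP q m r * z ^ r - crowdP q m r * (q * z) ^ r) +
        (if r = 0 then 0 else crowdP q m (r - 1) * q ^ (r - 1) * z ^ r) := by
    intro r
    show (crowdP q m r * (1 - q ^ r) +
        (if r = 0 then 0 else crowdP q m (r - 1) * q ^ (r - 1))) * z ^ r = _
    rcases eq_or_ne r 0 with hr | hr <;> simp [hr, mul_pow] <;> ring
  simp only [expand]
  rw [Finset.sum_add_distrib, Finset.sum_sub_distrib]
  have h1 : ∑ r ∈ Finset.range (m + 2), crowdP q m r * z ^ r =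
      ∑ r ∈ Finset.range (m + 1), crowdP q m r * z ^ r := by
    rw [Finset.sum_range_succ, crowdP_eq_zero q m (m + 1) (by omega)]; ring
  have h2 : ∑ r ∈ Finset.range (m + 2), crowdP q m r * (q * z) ^ r =
      ∑ r ∈ Finset.range (m + 1), crowdP q m r * (q * z) ^ r := by
    rw [Finset.sum_range_succ, crowdP_eq_zero q m (m + 1) (by omega)]; ring
  have h3 : ∑ r ∈ Finset.range (m + 2),
      (if r = 0 then (0:ℝ) else crowdP q m (r - 1) * q ^ (r - 1) * z ^ r) =
      z * ∑ r ∈ Finset.range (m + 1), crowdP q m r * (q * z) ^ r := by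
    rw [Finset.sum_range_succ' (fun r =>
      (if r = 0 then (0:ℝ) else crowdP q m (r - 1) * q ^ (r - 1) * z ^ r)) (m + 1)]
    rw [if_pos rfl, add_zero, Finset.mul_sum]
    exact Finset.sum_congr rfl fun r _ => by
      rw [if_neg (Nat.succ_ne_zero r), Nat.add_sub_cancel, mul_pow]; ring
  rw [h1, h2, h3]; ring

theorem stmt_3 (α : ℝ) (hα : 0 < α) :
    (∀ z : ℝ, crowdG (Real.exp (-α)) 0 z = 1) ∧
    (∀ (m : ℕ) (z : ℝ),
      crowdG (Real.exp (-α)) (m + 1) z =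
        crowdG (Real.exp (-α)) m z +
          (z - 1) * crowdG (Real.exp (-α)) m (Real.exp (-α) * z)) := by
  exact ⟨fun z => crowdG_zero _ z, fun m z => crowdG_rec _ m z⟩
end

section
/- Exact exponential moment identity: for every m ≥ 0, the crowding in-degree process satisfies ∑_{r=0}^{m} (P m r) · exp(α·r) = 1 + (exp(α) − 1)·m; equivalently G m (exp α) = 1 + (exp α − 1)·m. -/
open Finset Filter

lemma sum_crowdP (q : ℝ) (m : ℕ) :
    ∑ r ∈ Finset.range (m + 1), crowdP q m r = 1 := by
  induction m with
  | zero => simp [crowdP]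
  | succ n ih =>
    have hsplit : ∀ r ∈ Finset.range (n + 2),
        crowdP q (n + 1) r =
          crowdP q n r * (1 - q ^ r) +
            (if r = 0 then 0 else crowdP q n (r - 1) * q ^ (r - 1)) := by
      intro r _; rfl
    rw [Finset.sum_congr rfl hsplit, Finset.sum_add_distrib]
    have h1 : ∑ r ∈ Finset.range (n + 2), crowdP q n r * (1 - q ^ r)
        = ∑ r ∈ Finset.range (n + 1), crowdP q n r * (1 - q ^ r) := by
      rw [Finset.sum_range_succ, crowdP_eq_zero q n (n + 1) (by omega)]
      ring
    have h2 : ∑ r ∈ Finset.range (n + 2),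
        (if r = 0 then (0:ℝ) else crowdP q n (r - 1) * q ^ (r - 1))
        = ∑ r ∈ Finset.range (n + 1), crowdP q n r * q ^ r := by
      rw [Finset.sum_range_succ' (fun r => if r = 0 then (0:ℝ) else crowdP q n (r - 1) * q ^ (r - 1)) (n+1)]
      simp
    rw [h1, h2, ← Finset.sum_add_distrib]
    have : ∀ r ∈ Finset.range (n + 1),
        crowdP q n r * (1 - q ^ r) + crowdP q n r * q ^ r = crowdP q n r := by
      intro r _; ring
    rw [Finset.sum_congr rfl this, ih]

theorem stmt_4 (α : ℝ) (hα : 0 < α) (m : ℕ) :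
    crowdG (Real.exp (-α)) m (Real.exp α) = 1 + (Real.exp α - 1) * m := by
  set q := Real.exp (-α) with hq
  set z := Real.exp α with hz
  have hqz : q * z = 1 := by
    rw [hq, hz, ← Real.exp_add]; simp
  induction m with
  | zero => simp [crowdG, crowdP]
  | succ n ih =>
    have hsplit : ∀ r ∈ Finset.range (n + 2),
        crowdP q (n + 1) r * z ^ r =
          crowdP q n r * (1 - q ^ r) * z ^ r +
            (if r = 0 then 0 else crowdP q n (r - 1) * q ^ (r - 1) * z ^ r) := by
      intro r _
      show (crowdP q n r * (1 - q ^ r) +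
        (if r = 0 then 0 else crowdP q n (r - 1) * q ^ (r - 1))) * z ^ r = _
      by_cases h : r = 0 <;> simp [h] <;> ring
    unfold crowdG
    rw [Finset.sum_congr rfl hsplit, Finset.sum_add_distrib]
    have h1 : ∑ r ∈ Finset.range (n + 2), crowdP q n r * (1 - q ^ r) * z ^ r
        = ∑ r ∈ Finset.range (n + 1), crowdP q n r * (1 - q ^ r) * z ^ r := by
      rw [Finset.sum_range_succ, crowdP_eq_zero q n (n + 1) (by omega)]
      ring
    have h2 : ∑ r ∈ Finset.range (n + 2),
        (if r = 0 then (0:ℝ) else crowdP q n (r - 1) * q ^ (r - 1) * z ^ r)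
        = ∑ r ∈ Finset.range (n + 1), crowdP q n r * q ^ r * z ^ (r + 1) := by
      rw [Finset.sum_range_succ' (fun r => if r = 0 then (0:ℝ) else crowdP q n (r - 1) * q ^ (r - 1) * z ^ r) (n+1)]
      simp
    rw [h1, h2]
    have key : ∀ r : ℕ, crowdP q n r * (1 - q ^ r) * z ^ r
        + crowdP q n r * q ^ r * z ^ (r + 1)
        = crowdP q n r * z ^ r + (z - 1) * crowdP q n r := by
      intro r
      have hqz' : q ^ r * z ^ r = 1 := by
        rw [← mul_pow, hqz, one_pow]
      have : q ^ r * z ^ (r + 1) = z := by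
        rw [pow_succ, ← mul_assoc, hqz']; ring
      calc crowdP q n r * (1 - q ^ r) * z ^ r + crowdP q n r * q ^ r * z ^ (r + 1)
          = crowdP q n r * z ^ r - crowdP q n r * (q ^ r * z ^ r)
            + crowdP q n r * (q ^ r * z ^ (r + 1)) := by ring
        _ = _ := by rw [hqz', this]; ring
    rw [← Finset.sum_add_distrib, Finset.sum_congr rfl (fun r _ => key r),
      Finset.sum_add_distrib, ← Finset.mul_sum, sum_crowdP]
    have : (∑ r ∈ Finset.range (n + 1), crowdP q n r * z ^ r) = crowdG q n z := rfl
    rw [this, ih]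
    push_cast
    ring
end

section
/- Lower tail bound: for every m ≥ 1 and every natural number k, the crowding in-degree process satisfies ∑_{r=0}^{k−1} P m r ≤ (exp(α·k) − 1) / ((exp(α) − 1)·m). -/
open Finset Filter

lemma crowdP_nonneg {q : ℝ} (h0 : 0 ≤ q) (h1 : q ≤ 1) (m r : ℕ) :
    0 ≤ crowdP q m r := by
  induction m generalizing r with
  | zero =>
    simp only [crowdP]
    split <;> norm_num
  | succ m ih =>
    simp only [crowdP]
    have hle : 0 ≤ 1 - q ^ r := by
      have := pow_le_one₀ h0 h1 (n := r)
      linarith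
    split
    · simpa using mul_nonneg (ih r) hle
    · exact add_nonneg (mul_nonneg (ih r) hle)
        (mul_nonneg (ih _) (pow_nonneg h0 _))

lemma crowdS_rec (q : ℝ) (m k : ℕ) :
    ∑ r ∈ range (k + 1), crowdP q (m + 1) r
      = (∑ r ∈ range (k + 1), crowdP q m r) - q ^ k * crowdP q m k := by
  induction k with
  | zero => simp [crowdP]
  | succ k ih =>
    rw [sum_range_succ, sum_range_succ (n := k + 1), ih]
    have h : crowdP q (m + 1) (k + 1)
        = crowdP q m (k + 1) * (1 - q ^ (k + 1)) + crowdP q m k * q ^ k := by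
      simp [crowdP]
    rw [h]; ring

lemma crowd_sum_j (q : ℝ) (k M : ℕ) :
    q ^ k * ∑ j ∈ range M, crowdP q j k
      = 1 - ∑ r ∈ range (k + 1), crowdP q M r := by
  induction M with
  | zero => simp [crowdP, Finset.sum_ite_eq']
  | succ M ih =>
    rw [sum_range_succ, mul_add, ih, crowdS_rec]
    ring

theorem stmt_6 (α : ℝ) (hα : 0 < α) (m : ℕ) (hm : 1 ≤ m) (k : ℕ) :
    ∑ r ∈ Finset.range k, crowdP (Real.exp (-α)) m r ≤
      (Real.exp (α * k) - 1) / ((Real.exp α - 1) * m) := by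
  set q : ℝ := Real.exp (-α) with hq
  have hq0 : 0 < q := Real.exp_pos _
  have hq1 : q ≤ 1 := by
    rw [hq]
    exact Real.exp_le_one_iff.mpr (by linarith)
  have hPnn := crowdP_nonneg hq0.le hq1
  have hea : 1 < Real.exp α := by
    rw [show (1 : ℝ) = Real.exp 0 by simp]
    exact Real.exp_lt_exp.mpr hα
  -- S is antitone in m
  have hanti : ∀ j, ∑ r ∈ range k, crowdP q (j + 1) r ≤ ∑ r ∈ range k, crowdP q j r := by
    intro j
    cases k with
    | zero => simp
    | succ K =>
      rw [crowdS_rec]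
      have := mul_nonneg (pow_nonneg hq0.le K) (hPnn j K)
      linarith
  have hantimono : Antitone (fun j => ∑ r ∈ range k, crowdP q j r) :=
    antitone_nat_of_succ_le hanti
  -- m * S m ≤ ∑_{j<m} S j
  have h1 : (m : ℝ) * ∑ r ∈ range k, crowdP q m r
      ≤ ∑ j ∈ range m, ∑ r ∈ range k, crowdP q j r := by
    have := Finset.card_nsmul_le_sum (range m)
      (fun j => ∑ r ∈ range k, crowdP q j r)
      (∑ r ∈ range k, crowdP q m r)
      (fun j hj => hantimono (le_of_lt (mem_range.mp hj)))
    simpa [nsmul_eq_mul] using this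
  -- each column sum is bounded
  have h2 : ∀ r : ℕ, ∑ j ∈ range m, crowdP q j r ≤ (Real.exp α) ^ r := by
    intro r
    have key := crowd_sum_j q r m
    have hS : 0 ≤ ∑ r' ∈ range (r + 1), crowdP q m r' :=
      Finset.sum_nonneg fun r' _ => hPnn m r'
    have hqr : 0 < q ^ r := pow_pos hq0 r
    have : q ^ r * ∑ j ∈ range m, crowdP q j r ≤ 1 := by linarith
    have hinv : (Real.exp α) ^ r = (q ^ r)⁻¹ := by
      rw [hq, Real.exp_neg, inv_pow, inv_inv]
    rw [hinv, ← one_div]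
    exact (le_div_iff₀' hqr).mpr this
  have h3 : ∑ j ∈ range m, ∑ r ∈ range k, crowdP q j r
      ≤ ∑ r ∈ range k, (Real.exp α) ^ r := by
    rw [Finset.sum_comm]
    exact Finset.sum_le_sum fun r _ => h2 r
  have hgeom : ∑ r ∈ range k, (Real.exp α) ^ r
      = (Real.exp (α * k) - 1) / (Real.exp α - 1) := by
    rw [geom_sum_eq (ne_of_gt hea)]
    rw [mul_comm α (k : ℝ), Real.exp_nat_mul]
  have hm0 : (0 : ℝ) < m := by exact_mod_cast hm
  have hfin : (m : ℝ) * ∑ r ∈ range k, crowdP q m r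
      ≤ (Real.exp (α * k) - 1) / (Real.exp α - 1) := by
    calc (m : ℝ) * ∑ r ∈ range k, crowdP q m r
        ≤ ∑ j ∈ range m, ∑ r ∈ range k, crowdP q j r := h1
      _ ≤ ∑ r ∈ range k, (Real.exp α) ^ r := h3
      _ = _ := hgeom
  rw [← div_div, le_div_iff₀ hm0, mul_comm]
  exact hfin
end
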